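/- Under the extended monotonicity assumption, the set-valued operator A on ℝ^d defined by A(x,y,σ,μ,λ) := {(g + u, w, 0_n, 0_n, 0_m) : g ∈ F_e(x,σ), (u,w) ∈ N_C(x,y)} is maximally monotone. -/

import Mathlib

noncomputable section

open Matrix Finset Filter

/-- A vector in `ℝ^k`. -/
abbrev Vec (k : ℕ) := Fin k → ℝ

/-- A block vector in `ℝ^{kN}` (N blocks of size k). -/
abbrev VecN (N k : ℕ) := Fin N → Vec k

/-- Standard inner product on `ℝ^k`. -/
def dot {k : ℕ} (u v : Vec k) : ℝ := ∑ j, u j * v j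

/-- Standard inner product on `ℝ^{kN}`. -/
def dotN {N k : ℕ} (u v : VecN N k) : ℝ := ∑ i, dot (u i) (v i)

/-- Subdifferential of `g : ℝ^p → ℝ` at `x`. -/
def subdiff {p : ℕ} (g : Vec p → ℝ) (x : Vec p) : Set (Vec p) :=
  {v | ∀ z, g x + dot v (z - x) ≤ g z}

/-- Normal cone of `S ⊆ ℝ^p` at `x` (empty if `x ∉ S`). -/
def normalCone {p : ℕ} (S : Set (Vec p)) (x : Vec p) : Set (Vec p) :=
  {v | x ∈ S ∧ ∀ z ∈ S, dot v (z - x) ≤ 0}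

/-- The nonnegative orthant `ℝ^m_{≥0}`. -/
def orthant (m : ℕ) : Set (Vec m) := {v | ∀ j, 0 ≤ v j}

/-- Euclidean projection onto the nonnegative orthant. -/
def projPos {m : ℕ} (v : Vec m) : Vec m := fun j => max (v j) 0

/-- `M x = (1/N) Σ_i x_i` (the averaging map `M_n`, resp. its `m`-dim analogue). -/
def Mavg {N k : ℕ} (x : VecN N k) : Vec k := (N : ℝ)⁻¹ • ∑ i, x i

/-- `P y = Σ_i y_i`. -/
def Psum {N k : ℕ} (y : VecN N k) : Vec k := ∑ i, y i

/-- `Mᵀ μ` : transpose of the averaging map. -/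
def MavgT (N : ℕ) {k : ℕ} (μ : Vec k) : VecN N k := fun _ => (N : ℝ)⁻¹ • μ

/-- `Pᵀ λ` : transpose of the summing map. -/
def PsumT (N : ℕ) {k : ℕ} (l : Vec k) : VecN N k := fun _ => l

/-- Monotonicity of a set-valued map w.r.t. an inner product `ip`. -/
def MonoOn {V : Type} [AddCommGroup V] (ip : V → V → ℝ) (F : V → Set V) : Prop :=
  ∀ ω ω' u v, u ∈ F ω → v ∈ F ω' → 0 ≤ ip (u - v) (ω - ω')

/-- Maximal monotonicity of a set-valued map w.r.t. an inner product `ip`. -/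
def MaxMonoOn {V : Type} [AddCommGroup V] (ip : V → V → ℝ) (F : V → Set V) : Prop :=
  MonoOn ip F ∧ ∀ ω u, (∀ ω' v, v ∈ F ω' → 0 ≤ ip (u - v) (ω - ω')) → u ∈ F ω

/-- `A x = Σ_i A_i x_i` for `A = [A_1 ⋯ A_N]`. -/
def bigA {N n m : ℕ} (A : Fin N → Matrix (Fin m) (Fin n) ℝ) (x : VecN N n) : Vec m :=
  ∑ i, (A i).mulVec (x i)

/-- The collective feasible set `𝒳 = (∏_i Ω_i) ∩ {x : A x ≤ b}`. -/
def Xfeas {N n m : ℕ} (Ω : Fin N → Set (Vec n)) (A : Fin N → Matrix (Fin m) (Fin n) ℝ)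
    (b : Fin N → Vec m) : Set (VecN N n) :=
  {x | (∀ i, x i ∈ Ω i) ∧ ∀ j, bigA A x j ≤ (∑ i, b i) j}

/-- Extended pseudo-subdifferential `F_e(x, σ)`. -/
def Fe {N n : ℕ} (f : Fin N → Vec n → Vec n → ℝ) (x : VecN N n) (σ : Vec n) :
    Set (VecN N n) :=
  {g | ∀ i, g i ∈ subdiff (fun z => f i z σ) (x i)}

/-- Aggregative pseudo-subdifferential `F_a(x) = F_e(x, M_n x)`. -/
def Fa {N n : ℕ} (f : Fin N → Vec n → Vec n → ℝ) (x : VecN N n) : Set (VecN N n) :=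
  Fe f x (Mavg x)

/-- `x̄` is a variational generalized aggregative equilibrium (v-GAE):
it solves GVI(𝒳, F_a). -/
def isVGAE {N n m : ℕ} (Ω : Fin N → Set (Vec n)) (f : Fin N → Vec n → Vec n → ℝ)
    (A : Fin N → Matrix (Fin m) (Fin n) ℝ) (b : Fin N → Vec m) (xbar : VecN N n) : Prop :=
  xbar ∈ Xfeas Ω A b ∧ ∃ g ∈ Fa f xbar, ∀ x ∈ Xfeas Ω A b, 0 ≤ dotN g (x - xbar)

/-- The local constraint set `C = {(x,y) : x_i ∈ Ω_i, y_i = A_i x_i - b_i}`. -/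
def Cset {N n m : ℕ} (Ω : Fin N → Set (Vec n)) (A : Fin N → Matrix (Fin m) (Fin n) ℝ)
    (b : Fin N → Vec m) : Set (VecN N n × VecN N m) :=
  {p | ∀ i, p.1 i ∈ Ω i ∧ p.2 i = (A i).mulVec (p.1 i) - b i}

/-- Inner product on `ℝ^{nN} × ℝ^{mN}`. -/
def ip2 {N n m : ℕ} (p q : VecN N n × VecN N m) : ℝ := dotN p.1 q.1 + dotN p.2 q.2

/-- Normal cone in `ℝ^{nN} × ℝ^{mN}` (empty outside the set). -/
def nconeC {N n m : ℕ} (C : Set (VecN N n × VecN N m)) (p : VecN N n × VecN N m) :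
    Set (VecN N n × VecN N m) :=
  {v | p ∈ C ∧ ∀ q ∈ C, ip2 v (q - p) ≤ 0}

/-- The extended space `ℝ^d = ℝ^{nN} × ℝ^{mN} × ℝ^n × ℝ^n × ℝ^m`. -/
abbrev St (N n m : ℕ) := VecN N n × VecN N m × Vec n × Vec n × Vec m

/-- Inner product on the extended space. -/
def ipS {N n m : ℕ} (u v : St N n m) : ℝ :=
  dotN u.1 v.1 + dotN u.2.1 v.2.1 + dot u.2.2.1 v.2.2.1 + dot u.2.2.2.1 v.2.2.2.1 +
    dot u.2.2.2.2 v.2.2.2.2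

/-- `(x,y,σ,μ,λ) ∈ zer T` for the KKT operator `T`. -/
def inZerT {N n m : ℕ} (Ω : Fin N → Set (Vec n)) (f : Fin N → Vec n → Vec n → ℝ)
    (A : Fin N → Matrix (Fin m) (Fin n) ℝ) (b : Fin N → Vec m)
    (x : VecN N n) (y : VecN N m) (σ μ : Vec n) (lam : Vec m) : Prop :=
  ∃ g ∈ Fe f x σ, ∃ uw ∈ nconeC (Cset Ω A b) (x, y), ∃ v ∈ normalCone (orthant m) lam,
    g + uw.1 - MavgT N μ = 0 ∧ uw.2 + PsumT N lam = 0 ∧ μ = 0 ∧ Mavg x - σ = 0 ∧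
      v - Psum y = 0

/-- Inner product on `ℝ^{nN} × ℝ^n`. -/
def ipXs {N n : ℕ} (p q : VecN N n × Vec n) : ℝ := dotN p.1 q.1 + dot p.2 q.2

/-- The extended pseudo-subdifferential map `(x,σ) ↦ F_e(x,σ) × {0}`. -/
def FeExt {N n : ℕ} (f : Fin N → Vec n → Vec n → ℝ) (p : VecN N n × Vec n) :
    Set (VecN N n × Vec n) :=
  {q | q.1 ∈ Fe f p.1 p.2 ∧ q.2 = 0}

/-- The operator `𝒜(x,y,σ,μ,λ) = (F_e(x,σ) + N_C(x,y)-part, 0, 0, 0)`. -/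
def Aop {N n m : ℕ} (Ω : Fin N → Set (Vec n)) (f : Fin N → Vec n → Vec n → ℝ)
    (A : Fin N → Matrix (Fin m) (Fin n) ℝ) (b : Fin N → Vec m) (ω : St N n m) :
    Set (St N n m) :=
  {t | ∃ g ∈ Fe f ω.1 ω.2.2.1, ∃ uw ∈ nconeC (Cset Ω A b) (ω.1, ω.2.1),
    t = (g + uw.1, uw.2, 0, 0, 0)}

/-- The skew-symmetric linear map `S`. -/
def Smap {N n m : ℕ} (ω : St N n m) : St N n m :=
  (-MavgT N ω.2.2.2.1, PsumT N ω.2.2.2.2, ω.2.2.2.1, Mavg ω.1 - ω.2.2.1, -Psum ω.2.1)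

/-- The operator `ℬ = S + (0,0,0,0, N_{ℝ^m_{≥0}})`. -/
def Bop {N n m : ℕ} (ω : St N n m) : Set (St N n m) :=
  {t | ∃ v ∈ normalCone (orthant m) ω.2.2.2.2, t = Smap ω + (0, 0, 0, 0, v)}

/-- The block-diagonal positive-definite step-size matrix `Γ` acting on the extended space. -/
def GammaMap {N n m : ℕ} (γ : Fin N → ℝ) (α β δ : ℝ) (ω : St N n m) : St N n m :=
  (fun i => γ i • ω.1 i, fun i => γ i • ω.2.1 i, α • ω.2.2.1, β • ω.2.2.2.1,
    δ • ω.2.2.2.2)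

/-! ### Toolkit: algebra of `dot`, `dotN`, `ip2` -/

section Toolkit
variable {k N n m : ℕ}

lemma dot_comm (a b : Vec k) : dot a b = dot b a := by
  simp [dot, mul_comm]

lemma dot_add_left (a b c : Vec k) : dot (a + b) c = dot a c + dot b c := by
  simp [dot, add_mul, Finset.sum_add_distrib]

lemma dot_sub_left (a b c : Vec k) : dot (a - b) c = dot a c - dot b c := by
  simp [dot, sub_mul, Finset.sum_sub_distrib]

lemma dot_add_right (a b c : Vec k) : dot a (b + c) = dot a b + dot a c := by
  simp [dot, mul_add, Finset.sum_add_distrib]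

lemma dot_sub_right (a b c : Vec k) : dot a (b - c) = dot a b - dot a c := by
  simp [dot, mul_sub, Finset.sum_sub_distrib]

lemma dot_smul_left (s : ℝ) (a b : Vec k) : dot (s • a) b = s * dot a b := by
  simp [dot, Finset.mul_sum, mul_assoc]

lemma dot_smul_right (s : ℝ) (a b : Vec k) : dot a (s • b) = s * dot a b := by
  simp [dot, Finset.mul_sum]; ring_nf
  exact Finset.sum_congr rfl fun j _ => by ring

lemma dot_zero_left (a : Vec k) : dot 0 a = 0 := by simp [dot]

lemma dot_zero_right (a : Vec k) : dot a 0 = 0 := by simp [dot]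

lemma dot_neg_right (a b : Vec k) : dot a (-b) = - dot a b := by
  simp [dot, Finset.sum_neg_distrib]

lemma dot_self_nonneg (a : Vec k) : 0 ≤ dot a a :=
  Finset.sum_nonneg fun j _ => mul_self_nonneg _

lemma eq_zero_of_dot_self (a : Vec k) (h : dot a a = 0) : a = 0 := by
  funext j
  have h2 := (Finset.sum_eq_zero_iff_of_nonneg (fun j _ => mul_self_nonneg (a j))).1 h j (Finset.mem_univ j)
  exact mul_self_eq_zero.1 h2

lemma dotN_comm (a b : VecN N k) : dotN a b = dotN b a := by
  simp [dotN, dot_comm]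

lemma dotN_add_left (a b c : VecN N k) : dotN (a + b) c = dotN a c + dotN b c := by
  unfold dotN; rw [← Finset.sum_add_distrib]
  exact Finset.sum_congr rfl fun i _ => dot_add_left _ _ _

lemma dotN_sub_left (a b c : VecN N k) : dotN (a - b) c = dotN a c - dotN b c := by
  unfold dotN; rw [← Finset.sum_sub_distrib]
  exact Finset.sum_congr rfl fun i _ => dot_sub_left _ _ _

lemma dotN_add_right (a b c : VecN N k) : dotN a (b + c) = dotN a b + dotN a c := by
  unfold dotN; rw [← Finset.sum_add_distrib]
  exact Finset.sum_congr rfl fun i _ => dot_add_right _ _ _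

lemma dotN_sub_right (a b c : VecN N k) : dotN a (b - c) = dotN a b - dotN a c := by
  unfold dotN; rw [← Finset.sum_sub_distrib]
  exact Finset.sum_congr rfl fun i _ => dot_sub_right _ _ _

lemma dotN_smul_left (s : ℝ) (a b : VecN N k) : dotN (s • a) b = s * dotN a b := by
  unfold dotN; rw [Finset.mul_sum]
  exact Finset.sum_congr rfl fun i _ => dot_smul_left _ _ _

lemma dotN_smul_right (s : ℝ) (a b : VecN N k) : dotN a (s • b) = s * dotN a b := by
  unfold dotN; rw [Finset.mul_sum]
  exact Finset.sum_congr rfl fun i _ => dot_smul_right _ _ _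

lemma dotN_zero_left (a : VecN N k) : dotN 0 a = 0 := by simp [dotN, dot_zero_left]

lemma dotN_zero_right (a : VecN N k) : dotN a 0 = 0 := by simp [dotN, dot_zero_right]

lemma dotN_self_nonneg (a : VecN N k) : 0 ≤ dotN a a :=
  Finset.sum_nonneg fun i _ => dot_self_nonneg _

lemma eq_zero_of_dotN_self (a : VecN N k) (h : dotN a a = 0) : a = 0 := by
  funext i
  have h2 := (Finset.sum_eq_zero_iff_of_nonneg (fun i _ => dot_self_nonneg (a i))).1 h i (Finset.mem_univ i)
  exact eq_zero_of_dot_self _ h2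

lemma ip2_comm (a b : VecN N n × VecN N m) : ip2 a b = ip2 b a := by
  simp [ip2, dotN_comm]

lemma ip2_add_left (a b c : VecN N n × VecN N m) : ip2 (a + b) c = ip2 a c + ip2 b c := by
  simp [ip2, dotN_add_left]; ring

lemma ip2_sub_left (a b c : VecN N n × VecN N m) : ip2 (a - b) c = ip2 a c - ip2 b c := by
  simp [ip2, dotN_sub_left]; ring

lemma ip2_add_right (a b c : VecN N n × VecN N m) : ip2 a (b + c) = ip2 a b + ip2 a c := by
  simp [ip2, dotN_add_right]; ring

lemma ip2_sub_right (a b c : VecN N n × VecN N m) : ip2 a (b - c) = ip2 a b - ip2 a c := by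
  simp [ip2, dotN_sub_right]; ring

lemma ip2_smul_left (s : ℝ) (a b : VecN N n × VecN N m) : ip2 (s • a) b = s * ip2 a b := by
  simp [ip2, dotN_smul_left]; ring

lemma ip2_smul_right (s : ℝ) (a b : VecN N n × VecN N m) : ip2 a (s • b) = s * ip2 a b := by
  simp [ip2, dotN_smul_right]; ring

lemma ip2_zero_left (a : VecN N n × VecN N m) : ip2 0 a = 0 := by
  simp [ip2, dotN_zero_left]

lemma ip2_self_nonneg (a : VecN N n × VecN N m) : 0 ≤ ip2 a a :=
  add_nonneg (dotN_self_nonneg _) (dotN_self_nonneg _)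

lemma eq_zero_of_ip2_self (a : VecN N n × VecN N m) (h : ip2 a a = 0) : a = 0 := by
  have h1 : dotN a.1 a.1 = 0 := by
    have := dotN_self_nonneg a.1; have := dotN_self_nonneg a.2
    simp only [ip2] at h; linarith
  have h2 : dotN a.2 a.2 = 0 := by
    have := dotN_self_nonneg a.1; have := dotN_self_nonneg a.2
    simp only [ip2] at h; linarith
  have := eq_zero_of_dotN_self _ h1
  have := eq_zero_of_dotN_self _ h2
  exact Prod.ext (by assumption) (by assumption)

lemma continuous_dot {α : Type} [TopologicalSpace α] {u v : α → Vec k}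
    (hu : Continuous u) (hv : Continuous v) : Continuous fun a => dot (u a) (v a) :=
  continuous_finset_sum _ fun j _ => ((continuous_apply j).comp hu).mul ((continuous_apply j).comp hv)

lemma continuous_dotN {α : Type} [TopologicalSpace α] {u v : α → VecN N k}
    (hu : Continuous u) (hv : Continuous v) : Continuous fun a => dotN (u a) (v a) :=
  continuous_finset_sum _ fun i _ =>
    continuous_dot ((continuous_apply i).comp hu) ((continuous_apply i).comp hv)

end Toolkit
/-! ### Representation of linear functionals -/

section Rep
variable {k N n m : ℕ}

lemma rep_vec (φ : Vec k →ₗ[ℝ] ℝ) : ∃ a : Vec k, ∀ z, φ z = dot a z := by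
  refine ⟨fun j => φ (Pi.single j 1), fun z => ?_⟩
  calc φ z = φ (∑ j, Pi.single j (z j)) := by rw [Finset.univ_sum_single]
    _ = ∑ j, φ (Pi.single j (z j)) := map_sum φ _ _
    _ = ∑ j, φ (z j • (Pi.single j (1:ℝ) : Vec k)) := by
        refine Finset.sum_congr rfl fun j _ => ?_
        congr 1
        rw [← Pi.single_smul, smul_eq_mul, mul_one]
    _ = ∑ j, z j • φ ((Pi.single j (1:ℝ)) : Vec k) := by
        refine Finset.sum_congr rfl fun j _ => map_smul φ _ _
    _ = dot (fun j => φ (Pi.single j 1)) z := by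
        simp only [smul_eq_mul, dot]
        exact Finset.sum_congr rfl fun j _ => mul_comm _ _

lemma rep_vecN (φ : VecN N k →ₗ[ℝ] ℝ) : ∃ a : VecN N k, ∀ z, φ z = dotN a z := by
  choose a ha using fun i => rep_vec (φ.comp (LinearMap.single ℝ (fun _ : Fin N => Vec k) i))
  refine ⟨a, fun z => ?_⟩
  calc φ z = φ (∑ i, Pi.single i (z i)) := by rw [Finset.univ_sum_single]
    _ = ∑ i, φ (Pi.single i (z i)) := map_sum φ _ _
    _ = dotN a z := Finset.sum_congr rfl fun i _ => ha i (z i)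

lemma rep_prod (φ : (VecN N n × VecN N m) →ₗ[ℝ] ℝ) :
    ∃ a : VecN N n × VecN N m, ∀ z, φ z = ip2 a z := by
  obtain ⟨a1, ha1⟩ := rep_vecN (φ.comp (LinearMap.inl ℝ (VecN N n) (VecN N m)))
  obtain ⟨a2, ha2⟩ := rep_vecN (φ.comp (LinearMap.inr ℝ (VecN N n) (VecN N m)))
  refine ⟨(a1, a2), fun z => ?_⟩
  have e1 : φ (z.1, 0) = dotN a1 z.1 := ha1 z.1
  have e2 : φ ((0 : VecN N n), z.2) = dotN a2 z.2 := ha2 z.2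
  have hsplit : φ z = φ (z.1, 0) + φ ((0 : VecN N n), z.2) := by
    rw [← map_add]
    congr 1
    ext <;> simp
  rw [hsplit, e1, e2, ip2]

end Rep

/-! ### The key Hahn–Banach / sum-rule lemma -/

private lemma le_of_forall_pos_lt {x c d : ℝ} (hd : 0 < d)
    (h : ∀ ε : ℝ, 0 < ε → x < c + ε * d) : x ≤ c := by
  by_contra hcon
  push_neg at hcon
  have hε : 0 < (x - c) / d := div_pos (by linarith) hd
  have := h _ hε
  rw [div_mul_cancel₀ _ (ne_of_gt hd)] at this
  linarith

/-- If `v` is a subgradient of convex continuous `F` restricted to a convex set `S ∋ q`,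
then there is a global subgradient `g` of `F` at `q` such that `v - g` is in the normal
cone of `S` at `q`. -/
lemma key_lemma {N n m : ℕ} (F : VecN N n × VecN N m → ℝ) (hFc : Continuous F)
    (hFconv : ConvexOn ℝ Set.univ F) (S : Set (VecN N n × VecN N m)) (hS : Convex ℝ S)
    (q : VecN N n × VecN N m) (hq : q ∈ S) (v : VecN N n × VecN N m)
    (hv : ∀ z ∈ S, F q + ip2 v (z - q) ≤ F z) :
    ∃ g : VecN N n × VecN N m, (∀ z, F q + ip2 g (z - q) ≤ F z) ∧
      ∀ z ∈ S, ip2 (v - g) (z - q) ≤ 0 := by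
  classical
  set φ : VecN N n × VecN N m → ℝ := fun z => F z - F q - ip2 v (z - q) with hφ
  have hφcont : Continuous φ := by
    refine (hFc.sub continuous_const).sub ?_
    have : (fun z : VecN N n × VecN N m => ip2 v (z - q)) =
        fun z => dotN v.1 (z.1 - q.1) + dotN v.2 (z.2 - q.2) := by
      funext z; simp [ip2, Prod.fst_sub, Prod.snd_sub]
    rw [this]
    exact (continuous_dotN continuous_const (continuous_fst.sub continuous_const)).add
      (continuous_dotN continuous_const (continuous_snd.sub continuous_const))
  set s : Set ((VecN N n × VecN N m) × ℝ) := {zr | φ zr.1 < zr.2} with hs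
  have hsopen : IsOpen s := isOpen_lt (hφcont.comp continuous_fst) continuous_snd
  have hsconv : Convex ℝ s := by
    rintro ⟨z, r⟩ hzr ⟨z', r'⟩ hzr' a b ha hb hab
    simp only [hs, Set.mem_setOf_eq, Prod.smul_mk, Prod.mk_add_mk, smul_eq_mul] at hzr hzr' ⊢
    have hlin : ip2 v ((a • z + b • z') - q) = a * ip2 v (z - q) + b * ip2 v (z' - q) := by
      have hcomb : (a • z + b • z') - q = a • (z - q) + b • (z' - q) := by
        have h1 : a • (z - q) + b • (z' - q) = a • z + b • z' - (a + b) • q := by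
          rw [smul_sub, smul_sub, add_smul]; abel
        rw [h1, hab, one_smul]
      rw [hcomb, ip2_add_right, ip2_smul_right, ip2_smul_right]
    have hF := hFconv.2 (Set.mem_univ z) (Set.mem_univ z') ha hb hab
    simp only [smul_eq_mul] at hF
    have hFq : a * F q + b * F q = F q := by rw [← add_mul, hab, one_mul]
    have hφconv : φ (a • z + b • z') ≤ a * φ z + b * φ z' := by
      simp only [hφ]
      rw [hlin]
      ring_nf
      nlinarith [hF, hFq]
    have hcomb2 : a * φ z + b * φ z' < a * r + b * r' := by
      rcases eq_or_lt_of_le ha with h0 | hapos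
      · have hb1 : b = 1 := by linarith
        rw [← h0, hb1]; simpa using hzr'
      · rcases eq_or_lt_of_le hb with h0 | hbpos
        · have ha1 : a = 1 := by linarith
          rw [← h0, ha1]; simpa using hzr
        · have g1 := mul_lt_mul_of_pos_left hzr hapos
          have g2 := mul_lt_mul_of_pos_left hzr' hbpos
          linarith
    linarith
  have hTconv : Convex ℝ (S ×ˢ Set.Iic (0 : ℝ)) := hS.prod (convex_Iic 0)
  have hdisj : Disjoint s (S ×ˢ Set.Iic (0 : ℝ)) := by
    rw [Set.disjoint_left]
    intro zr hzr hT
    obtain ⟨hzS, hr⟩ := hT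
    simp only [hs, Set.mem_setOf_eq, hφ] at hzr
    have := hv zr.1 hzS
    simp only [Set.mem_Iic] at hr
    linarith
  obtain ⟨L, c, hsL, hTL⟩ := geometric_hahn_banach_open hsconv hsopen hTconv hdisj
  set ℓ : VecN N n × VecN N m → ℝ := fun z => L (z, 0) with hℓ
  set s₀ : ℝ := L (0, 1) with hs₀
  have hLform : ∀ z r, L (z, r) = ℓ z + r * s₀ := by
    intro z r
    have h1 : ((z, r) : (VecN N n × VecN N m) × ℝ) = (z, 0) + r • ((0 : VecN N n × VecN N m), (1 : ℝ)) := by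
      ext <;> simp
    rw [h1, map_add, ContinuousLinearMap.map_smul, smul_eq_mul]
  have fact_a : ∀ z r, φ z < r → ℓ z + r * s₀ < c := by
    intro z r h
    have := hsL (z, r) h
    rwa [hLform] at this
  have fact_b : ∀ z ∈ S, c ≤ ℓ z := by
    intro z hz
    have := hTL (z, 0) ⟨hz, Set.mem_Iic.2 (le_refl 0)⟩
    rwa [hLform, zero_mul, add_zero] at this
  have hφq : φ q = 0 := by simp [hφ, ip2, dotN_zero_right]
  have fact_c : s₀ < 0 := by
    have h1 := fact_a q 1 (by rw [hφq]; norm_num)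
    have h2 := fact_b q hq
    linarith
  have fact_d : ∀ z, ℓ z + φ z * s₀ ≤ c := by
    intro z
    refine le_of_forall_pos_lt (show (0:ℝ) < -s₀ by linarith) (fun ε hε => ?_)
    have := fact_a z (φ z + ε) (by linarith)
    nlinarith
  have hℓq : ℓ q = c := le_antisymm (by have := fact_d q; rw [hφq] at this; linarith) (fact_b q hq)
  obtain ⟨w, hw⟩ := rep_prod (L.toLinearMap.comp (LinearMap.inl ℝ (VecN N n × VecN N m) ℝ))
  have hwℓ : ∀ z, ℓ z = ip2 w z := fun z => hw z
  set g : VecN N n × VecN N m := v + (-s₀)⁻¹ • w with hg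
  have hip2g : ∀ z, ip2 g (z - q) = ip2 v (z - q) + (-s₀)⁻¹ * (ℓ z - ℓ q) := by
    intro z
    rw [hg, ip2_add_left, ip2_smul_left]
    congr 1
    rw [hwℓ z, hwℓ q, ← ip2_sub_right]
  have hs₀inv : (0:ℝ) < (-s₀)⁻¹ := inv_pos.2 (by linarith)
  refine ⟨g, fun z => ?_, fun z hz => ?_⟩
  · have hd := fact_d z
    have hkey : (-s₀)⁻¹ * (ℓ z - ℓ q) ≤ φ z := by
      rw [hℓq]
      rw [inv_mul_le_iff₀ (by linarith : (0:ℝ) < -s₀)]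
      nlinarith
    have hφz : φ z = F z - F q - ip2 v (z - q) := rfl
    rw [hip2g]
    linarith
  · have hform : ip2 (v - g) (z - q) = -((-s₀)⁻¹ * (ℓ z - ℓ q)) := by
      rw [ip2_sub_left, hip2g]; ring
    rw [hform]
    have h1 := fact_b z hz
    rw [hℓq]
    nlinarith
lemma dotN_neg_left {N k : ℕ} (a b : VecN N k) : dotN (-a) b = - dotN a b := by
  have : (-a) = (-1 : ℝ) • a := by rw [neg_one_smul]
  rw [this, dotN_smul_left]; ring
/-! ### Setup lemmas for the main theorem -/

section Setup
variable {N n m : ℕ}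

lemma ip2_neg_left (a b : VecN N n × VecN N m) : ip2 (-a) b = - ip2 a b := by
  have : (-a) = (-1 : ℝ) • a := by rw [neg_one_smul]
  rw [this, ip2_smul_left]; ring

lemma vec_eq_zero_of_bound {k : ℕ} (a : Vec k) (K : ℝ)
    (h : ∀ s : ℝ, 0 ≤ K - s * dot a a) : a = 0 := by
  apply eq_zero_of_dot_self
  by_contra hne
  have hpos : 0 < dot a a := lt_of_le_of_ne (dot_self_nonneg a) (Ne.symm hne)
  have h2 := h ((K + 1)/(dot a a))
  rw [div_mul_cancel₀ _ (ne_of_gt hpos)] at h2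
  linarith

lemma F_cont (f : Fin N → Vec n → Vec n → ℝ)
    (hfcont : ∀ i, Continuous (fun p : Vec n × Vec n => f i p.1 p.2)) (σ : Vec n) :
    Continuous fun z : VecN N n × VecN N m => ∑ i, f i (z.1 i) σ := by
  refine continuous_finset_sum _ fun i _ => ?_
  have hmap : Continuous (fun z : VecN N n × VecN N m => ((z.1 i, σ) : Vec n × Vec n)) :=
    (((continuous_apply i).comp continuous_fst).prodMk continuous_const)
  exact (hfcont i).comp hmap

lemma F_conv (f : Fin N → Vec n → Vec n → ℝ)
    (hfconv : ∀ i w, ConvexOn ℝ Set.univ (fun z => f i z w)) (σ : Vec n) :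
    ConvexOn ℝ Set.univ (fun z : VecN N n × VecN N m => ∑ i, f i (z.1 i) σ) := by
  refine ⟨convex_univ, fun z _ z' _ a b ha hb hab => ?_⟩
  simp only [smul_eq_mul]
  calc (∑ i, f i ((a • z + b • z').1 i) σ) = ∑ i, f i (a • z.1 i + b • z'.1 i) σ := rfl
    _ ≤ ∑ i, (a * f i (z.1 i) σ + b * f i (z'.1 i) σ) := by
        refine Finset.sum_le_sum fun i _ => ?_
        have := (hfconv i σ).2 (Set.mem_univ (z.1 i)) (Set.mem_univ (z'.1 i)) ha hb hab
        simpa using this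
    _ = a * ∑ i, f i (z.1 i) σ + b * ∑ i, f i (z'.1 i) σ := by
        rw [Finset.sum_add_distrib, ← Finset.mul_sum, ← Finset.mul_sum]

lemma cset_nonempty (Ω : Fin N → Set (Vec n)) (A : Fin N → Matrix (Fin m) (Fin n) ℝ)
    (b : Fin N → Vec m) (hΩne : ∀ i, (Ω i).Nonempty) : (Cset Ω A b).Nonempty :=
  ⟨(fun i => (hΩne i).some, fun i => (A i).mulVec ((hΩne i).some) - b i),
    fun i => ⟨(hΩne i).some_mem, rfl⟩⟩

lemma cset_compact (Ω : Fin N → Set (Vec n)) (A : Fin N → Matrix (Fin m) (Fin n) ℝ)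
    (b : Fin N → Vec m) (hΩcp : ∀ i, IsCompact (Ω i)) : IsCompact (Cset Ω A b) := by
  have hK : IsCompact (Set.univ.pi Ω) := isCompact_univ_pi hΩcp
  have hmap : Continuous (fun x : VecN N n =>
      ((x, fun i => (A i).mulVec (x i) - b i) : VecN N n × VecN N m)) := by
    refine continuous_id.prodMk (continuous_pi fun i => Continuous.sub ?_ continuous_const)
    refine continuous_pi fun j => ?_
    show Continuous fun x : VecN N n => ∑ l, A i j l * x i l
    refine continuous_finset_sum _ fun l _ => ?_
    exact continuous_const.mul ((continuous_apply l).comp (continuous_apply i))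
  have himg : Cset Ω A b =
      (fun x : VecN N n => ((x, fun i => (A i).mulVec (x i) - b i) : VecN N n × VecN N m)) ''
        (Set.univ.pi Ω) := by
    ext p
    constructor
    · intro hp
      refine ⟨p.1, Set.mem_univ_pi.2 fun i => (hp i).1, ?_⟩
      refine Prod.ext rfl ?_
      funext i
      exact ((hp i).2).symm
    · rintro ⟨x, hx, rfl⟩ i
      exact ⟨Set.mem_univ_pi.1 hx i, rfl⟩
  rw [himg]
  exact hK.image hmap

lemma cset_convex (Ω : Fin N → Set (Vec n)) (A : Fin N → Matrix (Fin m) (Fin n) ℝ)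
    (b : Fin N → Vec m) (hΩcv : ∀ i, Convex ℝ (Ω i)) : Convex ℝ (Cset Ω A b) := by
  intro p hp q hq a c ha hc hac
  intro i
  constructor
  · exact hΩcv i (hp i).1 (hq i).1 ha hc hac
  · show a • p.2 i + c • q.2 i = (A i).mulVec (a • p.1 i + c • q.1 i) - b i
    rw [(hp i).2, (hq i).2, Matrix.mulVec_add, Matrix.mulVec_smul, Matrix.mulVec_smul]
    rw [smul_sub, smul_sub, sub_add_sub_comm, ← add_smul, hac, one_smul]
  
/-- Extraction of blockwise subgradients from a joint subgradient of the separable sum. -/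
lemma extract_lemma (f : Fin N → Vec n → Vec n → ℝ) (σ : Vec n)
    (q : VecN N n × VecN N m) (g : VecN N n × VecN N m)
    (hg : ∀ z : VecN N n × VecN N m,
      (∑ i, f i (q.1 i) σ) + ip2 g (z - q) ≤ ∑ i, f i (z.1 i) σ) :
    g.1 ∈ Fe f q.1 σ ∧ g.2 = 0 := by
  classical
  constructor
  · intro i z₀
    have h := hg (Function.update q.1 i z₀, q.2)
    have e2 : ((Function.update q.1 i z₀, q.2) - q).2 = (0 : VecN N m) := sub_self _
    have hd1 : dotN g.1 (Function.update q.1 i z₀ - q.1) = dot (g.1 i) (z₀ - q.1 i) := by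
      unfold dotN
      rw [Finset.sum_eq_single i]
      · rw [show (Function.update q.1 i z₀ - q.1) i = z₀ - q.1 i by
          simp [Function.update_self]]
      · intro i' _ hne
        rw [show (Function.update q.1 i z₀ - q.1) i' = 0 by
          simp [Function.update_of_ne hne]]
        exact dot_zero_right _
      · intro hmem; exact absurd (Finset.mem_univ i) hmem
    have hip : ip2 g ((Function.update q.1 i z₀, q.2) - q) = dot (g.1 i) (z₀ - q.1 i) := by
      show dotN g.1 _ + dotN g.2 _ = _
      rw [show ((Function.update q.1 i z₀, q.2) - q).2 = (0:VecN N m) from e2]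
      rw [dotN_zero_right, add_zero]
      exact hd1
    have hsum : (∑ i', f i' (Function.update q.1 i z₀ i') σ) - (∑ i', f i' (q.1 i') σ)
        = f i z₀ σ - f i (q.1 i) σ := by
      rw [← Finset.sum_sub_distrib]
      rw [Finset.sum_eq_single i]
      · rw [Function.update_self]
      · intro i' _ hne
        rw [Function.update_of_ne hne]
        ring
      · intro hmem; exact absurd (Finset.mem_univ i) hmem
    rw [hip] at h
    have : f i (q.1 i) σ + dot (g.1 i) (z₀ - q.1 i) ≤ f i z₀ σ := by linarith [hsum, h]
    exact this
  · have h := hg (q.1, q.2 + g.2)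
    have hip : ip2 g ((q.1, q.2 + g.2) - q) = dotN g.2 g.2 := by
      show dotN g.1 (q.1 - q.1) + dotN g.2 (q.2 + g.2 - q.2) = _
      rw [sub_self, dotN_zero_right, zero_add, add_sub_cancel_left]
    rw [hip] at h
    have h2 : dotN g.2 g.2 ≤ 0 := by linarith
    exact eq_zero_of_dotN_self _ (le_antisymm h2 (dotN_self_nonneg _))

/-- Nonemptiness of the extended pseudo-subdifferential. -/
lemma fe_nonempty (f : Fin N → Vec n → Vec n → ℝ)
    (hfcont : ∀ i, Continuous (fun p : Vec n × Vec n => f i p.1 p.2))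
    (hfconv : ∀ i w, ConvexOn ℝ Set.univ (fun z => f i z w))
    (x' : VecN N n) (σ' : Vec n) : ∃ g, g ∈ Fe f x' σ' := by
  obtain ⟨g, hg, -⟩ := key_lemma (m := 0) (fun z => ∑ i, f i (z.1 i) σ')
    (F_cont f hfcont σ') (F_conv f hfconv σ') {((x', 0) : VecN N n × VecN N 0)}
    (convex_singleton _) (x', 0) rfl 0
    (by
      intro z hz
      rw [Set.mem_singleton_iff] at hz
      subst hz
      rw [ip2_zero_left, add_zero])
  exact ⟨g.1, (extract_lemma f σ' (x', 0) g hg).1⟩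

/-- Variational inequality for the prox minimizer. -/
lemma var_ineq (F : VecN N n × VecN N m → ℝ) (hFconv : ConvexOn ℝ Set.univ F)
    (Cs : Set (VecN N n × VecN N m)) (hconv : Convex ℝ Cs)
    (u q : VecN N n × VecN N m) (hq : q ∈ Cs)
    (hmin : ∀ z ∈ Cs, F q + (1/2) * ip2 (q - u) (q - u) ≤ F z + (1/2) * ip2 (z - u) (z - u)) :
    ∀ z ∈ Cs, F q + ip2 (u - q) (z - q) ≤ F z := by
  intro z hz
  set B : ℝ := ip2 (z - q) (z - q) with hB
  have hBnn : 0 ≤ B := ip2_self_nonneg _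
  set c : ℝ := F z - F q + ip2 (q - u) (z - q) with hc
  have hstep : ∀ θ : ℝ, 0 < θ → θ ≤ 1 → 0 ≤ c + θ * (B / 2) := by
    intro θ hθpos hθle
    have hmem : (1 - θ) • q + θ • z ∈ Cs := hconv hq hz (by linarith) (le_of_lt hθpos) (by ring)
    have hzθ : ((1 - θ) • q + θ • z) - u = (q - u) + θ • (z - q) := by
      rw [sub_smul, one_smul, smul_sub]
      abel
    have hquad : ip2 (((1 - θ) • q + θ • z) - u) (((1 - θ) • q + θ • z) - u)
        = ip2 (q - u) (q - u) + 2 * (θ * ip2 (q - u) (z - q)) + θ^2 * B := by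
      rw [hzθ, ip2_add_left, ip2_add_right, ip2_add_right, ip2_smul_left, ip2_smul_left,
        ip2_smul_right, ip2_smul_right, ip2_comm (z - q) (q - u), hB]
      ring
    have hFθ : F ((1 - θ) • q + θ • z) ≤ (1 - θ) * F q + θ * F z := by
      have := hFconv.2 (Set.mem_univ q) (Set.mem_univ z) (by linarith : (0:ℝ) ≤ 1 - θ)
        (le_of_lt hθpos) (by ring)
      simpa using this
    have hm := hmin _ hmem
    rw [hquad] at hm
    have key : 0 ≤ θ * (c + θ * (B / 2)) := by nlinarith
    by_contra hneg
    push_neg at hneg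
    nlinarith
  have hcnn : 0 ≤ c := by
    rcases eq_or_lt_of_le hBnn with hB0 | hBpos
    · have := hstep 1 one_pos (le_refl 1)
      rw [← hB0] at this
      linarith
    · by_contra hneg
      push_neg at hneg
      have hθ : 0 < -c / B := div_pos (by linarith) hBpos
      have hBne : B ≠ 0 := ne_of_gt hBpos
      rcases le_or_gt (-c / B) 1 with hle | hgt
      · have h1 := hstep (-c / B) hθ hle
        have h2 : -c / B * (B / 2) = -c / 2 := by
          field_simp
        rw [h2] at h1
        linarith
      · have h1 := hstep 1 one_pos (le_refl 1)
        rw [one_mul] at h1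
        have h2 : B < -c := (one_lt_div hBpos).1 hgt
        linarith
  have hneg2 : ip2 (u - q) (z - q) = - ip2 (q - u) (z - q) := by
    rw [show u - q = -(q - u) from (neg_sub q u).symm, ip2_neg_left]
  rw [hneg2]
  linarith

end Setup
/-- under the extended monotonicity assumption, the operator `𝒜` is
maximally monotone on `ℝ^d`. -/
theorem stmt2 {N n m : ℕ} (hN : 0 < N) (hn : 0 < n) (hm : 0 < m)
    (Ω : Fin N → Set (Vec n)) (f : Fin N → Vec n → Vec n → ℝ)
    (A : Fin N → Matrix (Fin m) (Fin n) ℝ) (b : Fin N → Vec m)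
    (hΩne : ∀ i, (Ω i).Nonempty) (hΩcp : ∀ i, IsCompact (Ω i))
    (hΩcv : ∀ i, Convex ℝ (Ω i))
    (hfcont : ∀ i, Continuous (fun p : Vec n × Vec n => f i p.1 p.2))
    (hfconv : ∀ i w, ConvexOn ℝ Set.univ (fun z => f i z w))
    (hmono : MaxMonoOn ipXs (FeExt f)) :
    MaxMonoOn ipS (Aop Ω f A b) := by
  constructor
  · -- monotonicity
    rintro ω ω' u v ⟨g, hg, uw, huw, rfl⟩ ⟨g', hg', uw', huw', rfl⟩
    have h1 : 0 ≤ dotN (g - g') (ω.1 - ω'.1) := by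
      have := hmono.1 (ω.1, ω.2.2.1) (ω'.1, ω'.2.2.1) (g, 0) (g', 0) ⟨hg, rfl⟩ ⟨hg', rfl⟩
      simpa [ipXs, Prod.fst_sub, Prod.snd_sub, sub_self, dot_zero_left] using this
    have h2a := huw.2 (ω'.1, ω'.2.1) huw'.1
    have h2b := huw'.2 (ω.1, ω.2.1) huw.1
    simp only [ip2, Prod.fst_sub, Prod.snd_sub] at h2a h2b
    simp only [ipS, Prod.fst_sub, Prod.snd_sub, sub_self, Prod.fst_zero, Prod.snd_zero,
      dot_zero_left, dot_zero_right, add_zero]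
    simp only [dotN_sub_left, dotN_sub_right, dotN_add_left] at h1 h2a h2b ⊢
    linarith
  · -- maximality
    intro ω t H
    obtain ⟨x, y, σ, μ, lam⟩ := ω
    -- the constraint set
    have hCne := cset_nonempty Ω A b hΩne
    have hCcp := cset_compact Ω A b hΩcp
    have hCcv := cset_convex Ω A b hΩcv
    set Fσ : VecN N n × VecN N m → ℝ := fun z => ∑ i, f i (z.1 i) σ with hFσ
    set u : VecN N n × VecN N m := (x + t.1, y + t.2.1) with hu
    -- prox minimization over C
    have hcont2 : Continuous fun z : VecN N n × VecN N m => ip2 (z - u) (z - u) := by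
      have heq : (fun z : VecN N n × VecN N m => ip2 (z - u) (z - u)) =
          fun z => dotN (z.1 - u.1) (z.1 - u.1) + dotN (z.2 - u.2) (z.2 - u.2) := by
        funext z; simp [ip2, Prod.fst_sub, Prod.snd_sub]
      rw [heq]
      exact ((continuous_dotN (continuous_fst.sub continuous_const)
        (continuous_fst.sub continuous_const)).add
        (continuous_dotN (continuous_snd.sub continuous_const)
        (continuous_snd.sub continuous_const)))
    have hφcont : Continuous fun z => Fσ z + (1/2) * ip2 (z - u) (z - u) :=
      (F_cont f hfcont σ).add (continuous_const.mul hcont2)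
    obtain ⟨q, hqC, hqmin⟩ := hCcp.exists_isMinOn hCne hφcont.continuousOn
    have hmin : ∀ z ∈ Cset Ω A b,
        Fσ q + (1/2) * ip2 (q - u) (q - u) ≤ Fσ z + (1/2) * ip2 (z - u) (z - u) :=
      fun z hz => (isMinOn_iff.1 hqmin) z hz
    have hvar := var_ineq Fσ (F_conv f hfconv σ) (Cset Ω A b) hCcv u q hqC hmin
    obtain ⟨g, hgglob, hgnc⟩ := key_lemma Fσ (F_cont f hfcont σ) (F_conv f hfconv σ)
      (Cset Ω A b) hCcv q hqC (u - q) hvar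
    obtain ⟨hgFe, hg2⟩ := extract_lemma f σ q g hgglob
    set uw : VecN N n × VecN N m := (u - q) - g with huwdef
    have huwnc : uw ∈ nconeC (Cset Ω A b) q := ⟨hqC, fun z hz => hgnc z hz⟩
    -- apply the maximality test at (q, σ, μ, lam)
    have hvA : ((g.1 + uw.1, uw.2, 0, 0, 0) : St N n m) ∈ Aop Ω f A b (q.1, q.2, σ, μ, lam) := by
      refine ⟨g.1, hgFe, (uw.1, uw.2), ?_, rfl⟩
      rw [Prod.mk.eta, Prod.mk.eta]
      exact huwnc
    have hH := H (q.1, q.2, σ, μ, lam) _ hvA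
    have e1 : t.1 - (g.1 + uw.1) = q.1 - x := by
      have h1 : uw.1 = u.1 - q.1 - g.1 := rfl
      have h2 : u.1 = x + t.1 := by rw [hu]
      rw [h1, h2]; abel
    have e2 : t.2.1 - uw.2 = q.2 - y := by
      have h1 : uw.2 = u.2 - q.2 - g.2 := rfl
      have h2 : u.2 = y + t.2.1 := by rw [hu]
      rw [h1, h2, hg2]; abel
    have hHcalc : ipS (t - (g.1 + uw.1, uw.2, 0, 0, 0)) (((x, y, σ, μ, lam) : St N n m) - (q.1, q.2, σ, μ, lam))
        = dotN (q.1 - x) (x - q.1) + dotN (q.2 - y) (y - q.2) := by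
      simp only [ipS, Prod.fst_sub, Prod.snd_sub, sub_self, Prod.fst_zero, Prod.snd_zero,
        dot_zero_left, dot_zero_right, add_zero]
      rw [e1, e2]
    rw [hHcalc] at hH
    have hxq : x = q.1 := by
      have hp1 : dotN (q.1 - x) (x - q.1) = - dotN (x - q.1) (x - q.1) := by
        rw [show q.1 - x = -(x - q.1) from (neg_sub x q.1).symm, dotN_neg_left]
      have hp2 : dotN (q.2 - y) (y - q.2) = - dotN (y - q.2) (y - q.2) := by
        rw [show q.2 - y = -(y - q.2) from (neg_sub y q.2).symm, dotN_neg_left]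
      rw [hp1, hp2] at hH
      have h1 := dotN_self_nonneg (x - q.1)
      have h2 := dotN_self_nonneg (y - q.2)
      have : dotN (x - q.1) (x - q.1) = 0 := by linarith
      have := eq_zero_of_dotN_self _ this
      exact sub_eq_zero.1 this
    have hyq : y = q.2 := by
      have hp1 : dotN (q.1 - x) (x - q.1) = - dotN (x - q.1) (x - q.1) := by
        rw [show q.1 - x = -(x - q.1) from (neg_sub x q.1).symm, dotN_neg_left]
      have hp2 : dotN (q.2 - y) (y - q.2) = - dotN (y - q.2) (y - q.2) := by
        rw [show q.2 - y = -(y - q.2) from (neg_sub y q.2).symm, dotN_neg_left]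
      rw [hp1, hp2] at hH
      have h1 := dotN_self_nonneg (x - q.1)
      have h2 := dotN_self_nonneg (y - q.2)
      have : dotN (y - q.2) (y - q.2) = 0 := by linarith
      have := eq_zero_of_dotN_self _ this
      exact sub_eq_zero.1 this
    have ht1 : t.1 = g.1 + uw.1 := by
      have := e1
      rw [← hxq, sub_self] at this
      exact sub_eq_zero.1 this
    have ht2 : t.2.1 = uw.2 := by
      have := e2
      rw [← hyq, sub_self] at this
      exact sub_eq_zero.1 this
    have hxyC : ((x, y) : VecN N n × VecN N m) ∈ Cset Ω A b := by
      rw [hxq, hyq, Prod.mk.eta]; exact hqC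
    have hgFe' : g.1 ∈ Fe f x σ := by rw [← hxq] at hgFe; exact hgFe
    have hzero_nc : (((0 : VecN N n), (0 : VecN N m)) : VecN N n × VecN N m)
        ∈ nconeC (Cset Ω A b) (x, y) :=
      ⟨hxyC, fun z _ => le_of_eq (ip2_zero_left _)⟩
    -- t₃ = 0
    have ht3 : t.2.2.1 = 0 := by
      apply vec_eq_zero_of_bound _ 0
      intro s
      obtain ⟨g', hg'⟩ := fe_nonempty f hfcont hfconv x (σ + s • t.2.2.1)
      have hmem : ((g' + (0:VecN N n), (0:VecN N m), 0, 0, 0) : St N n m)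
          ∈ Aop Ω f A b (x, y, σ + s • t.2.2.1, μ, lam) :=
        ⟨g', hg', (0, 0), hzero_nc, rfl⟩
      have hH2 := H (x, y, σ + s • t.2.2.1, μ, lam) _ hmem
      have hc : ipS (t - ((g' + (0:VecN N n), (0:VecN N m), 0, 0, 0) : St N n m))
          (((x, y, σ, μ, lam) : St N n m) - (x, y, σ + s • t.2.2.1, μ, lam))
          = 0 - s * dot t.2.2.1 t.2.2.1 := by
        simp only [ipS, Prod.fst_sub, Prod.snd_sub, sub_self, Prod.fst_zero, Prod.snd_zero,
          dotN_zero_right, dot_zero_left, dot_zero_right, add_zero, zero_add, sub_zero]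
        rw [show σ - (σ + s • t.2.2.1) = -(s • t.2.2.1) by abel]
        rw [dot_neg_right, dot_smul_right]
        ring
      rw [hc] at hH2
      exact hH2
    -- t₄ = 0
    have ht4 : t.2.2.2.1 = 0 := by
      apply vec_eq_zero_of_bound _ 0
      intro s
      have hmem : ((g.1 + (0:VecN N n), (0:VecN N m), 0, 0, 0) : St N n m)
          ∈ Aop Ω f A b (x, y, σ, μ + s • t.2.2.2.1, lam) :=
        ⟨g.1, hgFe', (0, 0), hzero_nc, rfl⟩
      have hH2 := H (x, y, σ, μ + s • t.2.2.2.1, lam) _ hmem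
      have hc : ipS (t - ((g.1 + (0:VecN N n), (0:VecN N m), 0, 0, 0) : St N n m))
          (((x, y, σ, μ, lam) : St N n m) - (x, y, σ, μ + s • t.2.2.2.1, lam))
          = 0 - s * dot t.2.2.2.1 t.2.2.2.1 := by
        simp only [ipS, Prod.fst_sub, Prod.snd_sub, sub_self, Prod.fst_zero, Prod.snd_zero,
          dotN_zero_right, dot_zero_left, dot_zero_right, add_zero, zero_add, sub_zero]
        rw [show μ - (μ + s • t.2.2.2.1) = -(s • t.2.2.2.1) by abel]
        rw [dot_neg_right, dot_smul_right]
        ring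
      rw [hc] at hH2
      exact hH2
    -- t₅ = 0
    have ht5 : t.2.2.2.2 = 0 := by
      apply vec_eq_zero_of_bound _ 0
      intro s
      have hmem : ((g.1 + (0:VecN N n), (0:VecN N m), 0, 0, 0) : St N n m)
          ∈ Aop Ω f A b (x, y, σ, μ, lam + s • t.2.2.2.2) :=
        ⟨g.1, hgFe', (0, 0), hzero_nc, rfl⟩
      have hH2 := H (x, y, σ, μ, lam + s • t.2.2.2.2) _ hmem
      have hc : ipS (t - ((g.1 + (0:VecN N n), (0:VecN N m), 0, 0, 0) : St N n m))
          (((x, y, σ, μ, lam) : St N n m) - (x, y, σ, μ, lam + s • t.2.2.2.2))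
          = 0 - s * dot t.2.2.2.2 t.2.2.2.2 := by
        simp only [ipS, Prod.fst_sub, Prod.snd_sub, sub_self, Prod.fst_zero, Prod.snd_zero,
          dotN_zero_right, dot_zero_left, dot_zero_right, add_zero, zero_add, sub_zero]
        rw [show lam - (lam + s • t.2.2.2.2) = -(s • t.2.2.2.2) by abel]
        rw [dot_neg_right, dot_smul_right]
        ring
      rw [hc] at hH2
      exact hH2
    -- assemble
    refine ⟨g.1, hgFe', (uw.1, uw.2), ?_, ?_⟩
    · show (uw.1, uw.2) ∈ nconeC (Cset Ω A b) (x, y)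
      rw [Prod.mk.eta, show ((x, y) : VecN N n × VecN N m) = q by rw [hxq, hyq, Prod.mk.eta]]
      exact huwnc
    · rw [← ht1, ← ht2]
      exact Prod.ext rfl (Prod.ext rfl (Prod.ext ht3 (Prod.ext ht4 ht5)))
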